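/- Let n ≥ 2 and let d be a positive integer with 4d < n. Let L : {-1,1}^n → ℝ be a function of degree at most D = 4d satisfying: E[L·p] ≥ 0 for every nonnegative 4d-junta p; |L̂(S)| ≤ 1 for every S ⊆ [n] with |S| ≤ 4d; and ‖L‖∞ ≤ n^{4d}. Then for every nonnegative d-junta c : {-1,1}^n → ℝ≥0 with ‖c‖∞ ≤ 1 and every (1/n⁴)-decaying function h : {-1,1}^n → ℝ, one has E[L·c·(1+h)] ≥ −n^{−8d}. -/

import Mathlib

open scoped BigOperators

noncomputable section

/-- Sign of a Boolean bit, encoding `b ↦ (-1)^b ∈ {-1,1}`. -/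
def sgn (x : Bool) : ℝ := if x then -1 else 1

/-- Expectation under the uniform distribution on a finite type. -/
def uexp {Ω : Type*} [Fintype Ω] (f : Ω → ℝ) : ℝ :=
  (∑ x, f x) / (Fintype.card Ω : ℝ)

/-- The parity character `χ_S(x) = ∏_{i ∈ S} x_i` on the cube `{-1,1}^n`. -/
def chi {n : ℕ} (S : Finset (Fin n)) (x : Fin n → Bool) : ℝ :=
  ∏ i ∈ S, sgn (x i)

/-- Fourier coefficient `f̂(S) = E[f · χ_S]`. -/
def fCoeff {n : ℕ} (f : (Fin n → Bool) → ℝ) (S : Finset (Fin n)) : ℝ :=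
  uexp (fun x => f x * chi S x)

open Classical in
/-- Fourier degree: the largest `|S|` with `f̂(S) ≠ 0`. -/
def fdeg {n : ℕ} (f : (Fin n → Bool) → ℝ) : ℕ :=
  (Finset.univ.filter (fun S : Finset (Fin n) => fCoeff f S ≠ 0)).sup Finset.card

/-- A `d`-junta: a function depending on at most `d` coordinates. -/
def IsJunta {n : ℕ} (d : ℕ) (h : (Fin n → Bool) → ℝ) : Prop :=
  ∃ T : Finset (Fin n), T.card ≤ d ∧ ∀ x y, (∀ i ∈ T, x i = y i) → h x = h y

/-- A conical `d`-junta: a nonnegative combination of nonnegative `d`-juntas. -/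
def IsConicalJunta {n : ℕ} (d : ℕ) (f : (Fin n → Bool) → ℝ) : Prop :=
  ∃ (N : ℕ) (c : Fin N → ℝ) (g : Fin N → (Fin n → Bool) → ℝ),
    (∀ i, 0 ≤ c i) ∧ (∀ i x, 0 ≤ g i x) ∧ (∀ i, IsJunta d (g i)) ∧
    ∀ x, f x = ∑ i, c i * g i x

/-- Nonnegative degree `deg₊(f)`: least `d` such that `f` is a conical `d`-junta. -/
def degPlus {n : ℕ} (f : (Fin n → Bool) → ℝ) : ℕ :=
  sInf {d | IsConicalJunta d f}

/-- The (modified inner-product) gadget `g : {0,1}^b × {0,1}^b → {-1,1}`,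
with output encoded as a Boolean exponent: `g(x,y) = x₁ ⊕ y₁ ⊕ (⊕ᵢ xᵢyᵢ)`. -/
def gadget {b : ℕ} (x y : Fin b → Bool) : Bool :=
  decide (((∑ i : Fin b,
        (if x i then (1 : ZMod 2) else 0) * (if y i then (1 : ZMod 2) else 0))
    + (if h : 0 < b then
        (if x ⟨0, h⟩ then (1 : ZMod 2) else 0) + (if y ⟨0, h⟩ then (1 : ZMod 2) else 0)
      else 0)) = 1)

/-- `G = g^{⊗n}`, the gadget applied coordinatewise. -/
def gadgetN {n b : ℕ} (x y : Fin n → Fin b → Bool) : Fin n → Bool :=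
  fun i => gadget (x i) (y i)

/-- The pattern matrix `M_f^b(x,y) = f(g^{⊗n}(x,y))`. -/
def patternMatrix {n : ℕ} (b : ℕ) (f : (Fin n → Bool) → ℝ) :
    (Fin n → Fin b → Bool) → (Fin n → Fin b → Bool) → ℝ :=
  fun x y => f (gadgetN x y)

/-- Nonnegative rank: least `r` such that `M` is a sum of `r` nonnegative rank-1 matrices. -/
def nnRank {α β : Type*} [Fintype α] [Fintype β] (M : α → β → ℝ) : ℕ :=
  sInf {r | ∃ (u : Fin r → α → ℝ) (v : Fin r → β → ℝ),
    (∀ i a, 0 ≤ u i a) ∧ (∀ i b, 0 ≤ v i b) ∧ ∀ a b, M a b = ∑ i, u i a * v i b}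

/-- Entrywise sup-norm of a matrix. -/
def supAbs {α β : Type*} [Fintype α] [Fintype β] (M : α → β → ℝ) : ℝ :=
  ⨆ p : α × β, |M p.1 p.2|

/-- `ε`-approximate nonnegative rank. -/
def approxNNRank {α β : Type*} [Fintype α] [Fintype β] (ε : ℝ) (M : α → β → ℝ) : ℕ :=
  sInf {r | ∃ M' : α → β → ℝ, (∀ a b, 0 ≤ M' a b) ∧
    (∀ a b, |M' a b - M a b| ≤ ε * supAbs M) ∧ nnRank M' ≤ r}

/-- A density: nonnegative with expectation 1 under the uniform distribution. -/
def IsDensity {Ω : Type*} [Fintype Ω] (u : Ω → ℝ) : Prop :=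
  (∀ x, 0 ≤ u x) ∧ uexp u = 1

/-- `Pr_{X ~ μ}[X ∈ S]` for a density `μ`. -/
def prSet {Ω : Type*} [Fintype Ω] (μ : Ω → ℝ) (S : Finset Ω) : ℝ :=
  (∑ x ∈ S, μ x) / (Fintype.card Ω : ℝ)

/-- Min-entropy `H∞(u) = min_x log₂(|Ω| / u(x)) = -log₂ max_x Pr[X = x]`. -/
def minEntropy {Ω : Type*} [Fintype Ω] (u : Ω → ℝ) : ℝ :=
  - Real.logb 2 (⨆ x, u x / (Fintype.card Ω : ℝ))

open Classical in
/-- `Pr_{X ~ u}[X_I = y_I]`, the probability that the projection to `I` agrees with `y`. -/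
def prMarg {n : ℕ} {α : Type*} [Fintype α] (u : (Fin n → α) → ℝ) (I : Finset (Fin n))
    (y : Fin n → α) : ℝ :=
  (∑ x ∈ Finset.univ.filter (fun x : Fin n → α => ∀ i ∈ I, x i = y i), u x)
    / (Fintype.card (Fin n → α) : ℝ)

/-- Min-entropy of the projection `X_I` for `X ~ u`. -/
def projMinEntropy {n : ℕ} {α : Type*} [Fintype α] (u : (Fin n → α) → ℝ)
    (I : Finset (Fin n)) : ℝ :=
  - Real.logb 2 (⨆ y : Fin n → α, prMarg u I y)

/-- Blockwise-dense: every projection has min-entropy at least `0.8 |I| log₂ q`. -/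
def IsBlockwiseDense {n : ℕ} {α : Type*} [Fintype α] (u : (Fin n → α) → ℝ) : Prop :=
  ∀ I : Finset (Fin n),
    0.8 * (I.card : ℝ) * Real.logb 2 (Fintype.card α) ≤ projMinEntropy u I

/-- `d`-CBD with fixed set `I`: `X_I` is fixed and every disjoint projection is dense. -/
def IsCBDWith {n : ℕ} {α : Type*} [Fintype α] (d : ℝ) (I : Finset (Fin n))
    (u : (Fin n → α) → ℝ) : Prop :=
  (I.card : ℝ) ≤ d ∧ projMinEntropy u I = 0 ∧
  ∀ J : Finset (Fin n), Disjoint J I →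
    0.8 * (J.card : ℝ) * Real.logb 2 (Fintype.card α) ≤ projMinEntropy u J

/-- `d`-CBD distribution. -/
def IsCBD {n : ℕ} {α : Type*} [Fintype α] (d : ℝ) (u : (Fin n → α) → ℝ) : Prop :=
  ∃ I, IsCBDWith d I u

open Classical in
/-- `Acc_{u,v}`: the density on `{-1,1}^n` of `g^{⊗n}(X,Y)` for independent `X ~ u`, `Y ~ v`. -/
def AccFn {n b : ℕ} (u v : (Fin n → Fin b → Bool) → ℝ) (z : Fin n → Bool) : ℝ :=
  (2 : ℝ) ^ n * (∑ x : Fin n → Fin b → Bool, ∑ y : Fin n → Fin b → Bool,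
      if gadgetN x y = z then u x * v y else 0)
    / (Fintype.card (Fin n → Fin b → Bool) : ℝ) ^ 2

/-- `ε`-decaying function: mean zero with `|ĥ(S)| ≤ ε^{|S|}`. -/
def IsDecaying {n : ℕ} (ε : ℝ) (h : (Fin n → Bool) → ℝ) : Prop :=
  uexp h = 0 ∧ ∀ S : Finset (Fin n), |fCoeff h S| ≤ ε ^ S.card

/-- A `d`-conjunction, normalized to have expectation 1. -/
def IsConjunction {n : ℕ} (d : ℕ) (C : (Fin n → Bool) → ℝ) : Prop :=
  ∃ (I : Finset (Fin n)) (a : Fin n → Bool), I.card ≤ d ∧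
    ∀ x, C x = 2 ^ I.card * (if ∀ i ∈ I, x i = a i then (1 : ℝ) else 0)

/-- `(ε,δ)`-approximate conical `d`-junta. -/
def IsApproxConicalJunta {n : ℕ} (ε δ : ℝ) (d : ℕ) (f : (Fin n → Bool) → ℝ) : Prop :=
  ∃ (N : ℕ) (lam : Fin N → ℝ) (C h : Fin N → (Fin n → Bool) → ℝ)
    (γ : (Fin n → Bool) → ℝ),
    (∀ i, 0 ≤ lam i) ∧ (∑ i, lam i) ≤ 1 ∧
    (∀ i, IsConjunction d (C i)) ∧ (∀ i, IsDecaying ε (h i)) ∧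
    (∀ x, 0 ≤ γ x) ∧ uexp γ ≤ δ ∧
    ∀ x, f x = (∑ i, lam i * C i x * (1 + h i x)) + γ x

open Classical in
/-- The density `μ` conditioned on the event `S`. -/
def condDensity {Ω : Type*} [Fintype Ω] (μ : Ω → ℝ) (S : Finset Ω) : Ω → ℝ :=
  fun x => if x ∈ S then μ x / prSet μ S else 0

/-- First marginal density of a density on a product. -/
def margFst {Ω : Type*} [Fintype Ω] (μ : Ω × Ω → ℝ) : Ω → ℝ :=
  fun x => (∑ y, μ (x, y)) / (Fintype.card Ω : ℝ)

/-- Second marginal density of a density on a product. -/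
def margSnd {Ω : Type*} [Fintype Ω] (μ : Ω × Ω → ℝ) : Ω → ℝ :=
  fun y => (∑ x, μ (x, y)) / (Fintype.card Ω : ℝ)

open Classical in
/-- `Pr_{(X,Y) ~ μ}[X_I = y.1_I ∧ Y_I = y.2_I]`. -/
def prMarg2 {n : ℕ} {α : Type*} [Fintype α]
    (μ : (Fin n → α) × (Fin n → α) → ℝ) (I : Finset (Fin n))
    (y : (Fin n → α) × (Fin n → α)) : ℝ :=
  (∑ x ∈ Finset.univ.filter
      (fun x : (Fin n → α) × (Fin n → α) =>
        (∀ i ∈ I, x.1 i = y.1 i) ∧ (∀ i ∈ I, x.2 i = y.2 i)), μ x)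
    / (Fintype.card ((Fin n → α) × (Fin n → α)) : ℝ)

/-- Min-entropy of the projection `μ_I` of a density on a product, projecting both factors. -/
def projMinEntropy2 {n : ℕ} {α : Type*} [Fintype α]
    (μ : (Fin n → α) × (Fin n → α) → ℝ) (I : Finset (Fin n)) : ℝ :=
  - Real.logb 2 (⨆ y : (Fin n → α) × (Fin n → α), prMarg2 μ I y)


/-!
Write `F = L·c`. Expanding `E[F·(1+h)] = E[F] + ∑_S F̂(S) ĥ(S)` in the Fourier basis, the term
`S = ∅` vanishes because `h` has mean zero. For `1 ≤ |S| ≤ 3d` the functions `c·(1 ± χ_S)` are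
nonnegative `4d`-juntas, so positivity of `L` gives `|F̂(S)| ≤ E[F]`; for the other `S` the
convolution formula for `F̂` and the coefficient bounds on `L` and `c` give `|F̂(S)| ≤ 2^d`.
Since `|ĥ(S)| ≤ n^{-4|S|}`, the first range costs at most `E[F]·3n^{-3} ≤ E[F]` and the second
at most `2^d·3·n^{-3(3d+1)} ≤ n^{-8d}`.
-/

open Finset

section Expectation

variable {Ω : Type*} [Fintype Ω]

lemma uexp_add (f g : Ω → ℝ) : uexp (fun x => f x + g x) = uexp f + uexp g := by
  simp only [uexp, sum_add_distrib, add_div]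

lemma uexp_const_mul (a : ℝ) (f : Ω → ℝ) : uexp (fun x => a * f x) = a * uexp f := by
  simp only [uexp, ← mul_sum, mul_div_assoc]

lemma uexp_sum {ι : Type*} (s : Finset ι) (f : ι → Ω → ℝ) :
    uexp (fun x => ∑ i ∈ s, f i x) = ∑ i ∈ s, uexp (f i) := by
  simp only [uexp, ← sum_div]
  rw [sum_comm]

lemma abs_uexp_le [Nonempty Ω] {f : Ω → ℝ} {M : ℝ} (hf : ∀ x, |f x| ≤ M) : |uexp f| ≤ M := by
  rw [uexp, abs_div, Nat.abs_cast, div_le_iff₀ (by positivity)]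
  calc |∑ x, f x| ≤ ∑ x, |f x| := abs_sum_le_sum_abs _ _
    _ ≤ ∑ _x : Ω, M := sum_le_sum fun x _ => hf x
    _ = M * Fintype.card Ω := by simp [mul_comm]

end Expectation

section FourierAnalysis

variable {n : ℕ}

lemma sgn_mul_self (b : Bool) : sgn b * sgn b = 1 := by cases b <;> simp [sgn]

lemma sgn_not (b : Bool) : sgn (!b) = -sgn b := by cases b <;> simp [sgn]

lemma abs_chi (S : Finset (Fin n)) (x : Fin n → Bool) : |chi S x| = 1 := by
  rw [chi, abs_prod]
  exact prod_eq_one fun i _ => by cases x i <;> simp [sgn]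

lemma chi_congr (S : Finset (Fin n)) {x y : Fin n → Bool} (hxy : ∀ i ∈ S, x i = y i) :
    chi S x = chi S y :=
  prod_congr rfl fun i hi => by rw [hxy i hi]

lemma chi_mul_chi (S T : Finset (Fin n)) (x : Fin n → Bool) :
    chi S x * chi T x = chi (symmDiff S T) x := by
  have hchi : ∀ U, chi U x = ∏ i, if i ∈ U then sgn (x i) else 1 := fun U => by
    rw [prod_ite_mem, univ_inter, chi]
  rw [hchi, hchi, hchi, ← prod_mul_distrib]
  refine prod_congr rfl fun i _ => ?_
  by_cases hS : i ∈ S <;> by_cases hT : i ∈ T <;> simp [hS, hT, mem_symmDiff, sgn_mul_self]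

lemma sum_chi_mul_chi (x y : Fin n → Bool) :
    ∑ S : Finset (Fin n), chi S x * chi S y = if x = y then 2 ^ n else 0 := by
  have hfactor : ∀ i, sgn (x i) * sgn (y i) + 1 = if x i = y i then 2 else 0 := by
    intro i
    cases x i <;> cases y i <;> norm_num [sgn]
  simp only [chi, ← prod_mul_distrib]
  rw [← powerset_univ, ← prod_add_one]
  simp only [hfactor]
  split_ifs with hxy
  · simp [hxy]
  · obtain ⟨i, hi⟩ := Function.ne_iff.mp hxy
    exact prod_eq_zero (mem_univ i) (if_neg hi)

lemma sum_fCoeff_mul_chi (f : (Fin n → Bool) → ℝ) (y : Fin n → Bool) :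
    ∑ S : Finset (Fin n), fCoeff f S * chi S y = f y := by
  have hcard : (Fintype.card (Fin n → Bool) : ℝ) = 2 ^ n := by simp
  simp only [fCoeff, uexp, hcard, div_mul_eq_mul_div, ← sum_div, sum_mul, mul_assoc]
  rw [sum_comm]
  simp only [← mul_sum, sum_chi_mul_chi, mul_ite, mul_zero, sum_ite_eq', mem_univ, if_true]
  field_simp

lemma fCoeff_empty (f : (Fin n → Bool) → ℝ) : fCoeff f ∅ = uexp f := by
  simp [fCoeff, chi]

lemma fCoeff_eq_zero_of_not_subset {f : (Fin n → Bool) → ℝ} {T : Finset (Fin n)}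
    (hT : ∀ x y, (∀ i ∈ T, x i = y i) → f x = f y) {S : Finset (Fin n)} (hS : ¬S ⊆ T) :
    fCoeff f S = 0 := by
  obtain ⟨i, hiS, hiT⟩ := not_subset.mp hS
  let flip : (Fin n → Bool) → (Fin n → Bool) := fun x => Function.update x i (!x i)
  have hflip : Function.Involutive flip := fun x => by
    ext j
    by_cases hj : j = i
    · subst hj; simp [flip]
    · simp [flip, hj]
  have hf : ∀ x, f (flip x) = f x := fun x =>
    hT _ _ fun j hj => by simp [flip, show j ≠ i from ne_of_mem_of_not_mem hj hiT]
  -- flipping a coordinate in `S \ T` keeps `f` and changes the sign of `χ_S`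
  have hchi : ∀ x, chi S (flip x) = -chi S x := fun x => by
    have hrest : ∀ j ∈ S.erase i, sgn (flip x j) = sgn (x j) := fun j hj => by
      simp [flip, ne_of_mem_erase hj]
    rw [chi, chi, ← mul_prod_erase S _ hiS, ← mul_prod_erase S _ hiS, prod_congr rfl hrest]
    simp [flip, sgn_not]
  have hsum : ∑ x, f x * chi S x = -∑ x, f x * chi S x := by
    conv_lhs => rw [← Equiv.sum_comp hflip.toPerm]
    simp [hf, hchi]
  rw [fCoeff, uexp, show ∑ x, f x * chi S x = 0 by linarith, zero_div]

lemma sum_powerset_fCoeff_mul_chi {f : (Fin n → Bool) → ℝ} {T : Finset (Fin n)}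
    (hT : ∀ x y, (∀ i ∈ T, x i = y i) → f x = f y) (y : Fin n → Bool) :
    ∑ S ∈ T.powerset, fCoeff f S * chi S y = f y := by
  rw [← sum_fCoeff_mul_chi f y]
  refine sum_subset (subset_univ _) fun S _ hS => ?_
  rw [fCoeff_eq_zero_of_not_subset hT (by simpa using hS), zero_mul]

lemma uexp_mul_eq_sum_fCoeff_mul (f g : (Fin n → Bool) → ℝ) :
    uexp (fun x => f x * g x) = ∑ S : Finset (Fin n), fCoeff f S * fCoeff g S := by
  conv_lhs => enter [1, x]; rw [← sum_fCoeff_mul_chi g x, mul_sum]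
  rw [uexp_sum]
  refine sum_congr rfl fun S _ => ?_
  simp only [mul_left_comm (f _) (fCoeff g S), uexp_const_mul]
  exact mul_comm _ _

lemma fCoeff_mul_eq_sum_powerset {L c : (Fin n → Bool) → ℝ} {T : Finset (Fin n)}
    (hT : ∀ x y, (∀ i ∈ T, x i = y i) → c x = c y) (S : Finset (Fin n)) :
    fCoeff (fun x => L x * c x) S = ∑ U ∈ T.powerset, fCoeff c U * fCoeff L (symmDiff S U) := by
  have hexpand : ∀ x, L x * c x * chi S x
      = ∑ U ∈ T.powerset, fCoeff c U * (L x * chi (symmDiff S U) x) := fun x => by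
    rw [← sum_powerset_fCoeff_mul_chi hT x, mul_sum, sum_mul]
    refine sum_congr rfl fun U _ => ?_
    rw [← chi_mul_chi]
    ring
  simp only [fCoeff, hexpand, uexp_sum, uexp_const_mul]

lemma abs_fCoeff_le {f : (Fin n → Bool) → ℝ} {M : ℝ} (hf : ∀ x, |f x| ≤ M)
    (S : Finset (Fin n)) : |fCoeff f S| ≤ M :=
  abs_uexp_le fun x => by rw [abs_mul, abs_chi, mul_one]; exact hf x

lemma fCoeff_eq_zero_of_fdeg_lt {f : (Fin n → Bool) → ℝ} {S : Finset (Fin n)}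
    (hS : fdeg f < S.card) : fCoeff f S = 0 := by
  classical
  by_contra hne
  exact hS.not_ge (le_sup (f := Finset.card) (by simp [hne]))

end FourierAnalysis

section PowerSums

variable {n : ℕ}

lemma sum_pow_card (a : ℝ) : ∑ S : Finset (Fin n), a ^ S.card = (1 + a) ^ n := by
  simpa [add_comm] using Fintype.sum_pow_mul_eq_add_pow (Fin n) a 1

-- `ε^|S| ≤ (nε)^m · n^{-|S|}`, and the weights `n^{-|S|}` sum to `(1 + 1/n)^n ≤ e`
lemma sum_filter_pow_card_le {ε : ℝ} (hn : n ≠ 0) (hε : 0 ≤ ε) (hnε : n * ε ≤ 1) (m : ℕ) :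
    ∑ S ∈ univ.filter (fun S : Finset (Fin n) => m ≤ S.card), ε ^ S.card
      ≤ 3 * (n * ε) ^ m := by
  have hterm : ∀ S ∈ univ.filter (fun S : Finset (Fin n) => m ≤ S.card),
      ε ^ S.card ≤ (n * ε) ^ m * (n : ℝ)⁻¹ ^ S.card := fun S hS => by
    calc ε ^ S.card = (n * ε) ^ S.card * (n : ℝ)⁻¹ ^ S.card := by
          rw [← mul_pow]; field_simp
      _ ≤ (n * ε) ^ m * (n : ℝ)⁻¹ ^ S.card := by
          exact mul_le_mul_of_nonneg_right
            (pow_le_pow_of_le_one (by positivity) hnε (mem_filter.mp hS).2) (by positivity)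
  calc _ ≤ ∑ S ∈ univ.filter (fun S : Finset (Fin n) => m ≤ S.card),
        (n * ε) ^ m * (n : ℝ)⁻¹ ^ S.card := sum_le_sum hterm
    _ ≤ ∑ S : Finset (Fin n), (n * ε) ^ m * (n : ℝ)⁻¹ ^ S.card :=
        sum_le_sum_of_subset_of_nonneg (filter_subset _ _) fun _ _ _ => by positivity
    _ = (n * ε) ^ m * (1 + (n : ℝ)⁻¹) ^ n := by rw [← mul_sum, sum_pow_card]
    _ ≤ (n * ε) ^ m * 3 := by
        gcongr
        exact Real.one_add_inv_pow_le_exp.trans (Real.exp_one_lt_d9.le.trans (by norm_num))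
    _ = 3 * (n * ε) ^ m := mul_comm _ _

end PowerSums

lemma two_pow_mul_three_mul_inv_pow_le {n : ℕ} (d : ℕ) (hn : 2 ≤ n) :
    2 ^ d * (3 * ((n : ℝ) ^ 3)⁻¹ ^ (3 * d + 1)) ≤ ((n : ℝ) ^ (8 * d))⁻¹ := by
  have hn' : (2 : ℝ) ≤ n := by exact_mod_cast hn
  have hsmall : 3 * 2 ^ d ≤ (n : ℝ) ^ (d + 3) :=
    calc 3 * 2 ^ d ≤ (2 : ℝ) ^ (d + 3) := by rw [pow_add]; nlinarith [pow_pos (two_pos : (0 : ℝ) < 2) d]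
      _ ≤ (n : ℝ) ^ (d + 3) := pow_le_pow_left₀ (by norm_num) hn' _
  rw [← inv_pow, ← pow_mul, show 3 * (3 * d + 1) = (d + 3) + 8 * d by ring, pow_add, ← inv_pow]
  have hpos : (0 : ℝ) < (n : ℝ)⁻¹ ^ (8 * d) := by positivity
  have hinv : 2 ^ d * (3 * (n : ℝ)⁻¹ ^ (d + 3)) ≤ 1 := by
    rw [inv_pow, ← mul_assoc, mul_comm (2 ^ d : ℝ), ← div_eq_mul_inv, div_le_one (by positivity)]
    exact hsmall
  nlinarith

section SeparatingFunctional

variable {n : ℕ} {L c : (Fin n → Bool) → ℝ}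

-- `c·(1 ± χ_S)` is a nonnegative `k`-junta, so positivity of `L` applies to it
lemma abs_fCoeff_mul_le_uexp_mul {j k : ℕ}
    (hL : ∀ p : (Fin n → Bool) → ℝ, (∀ x, 0 ≤ p x) → IsJunta k p →
      0 ≤ uexp (fun x => L x * p x))
    (hc0 : ∀ x, 0 ≤ c x) (hc : IsJunta j c) {S : Finset (Fin n)} (hS : j + S.card ≤ k) :
    |fCoeff (fun x => L x * c x) S| ≤ uexp (fun x => L x * c x) := by
  obtain ⟨T, hTj, hT⟩ := hc
  have hshift : ∀ s : ℝ, |s| ≤ 1 →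
      0 ≤ uexp (fun x => L x * c x) + s * fCoeff (fun x => L x * c x) S := by
    intro s hs
    have hjunta : IsJunta k (fun x => c x * (1 + s * chi S x)) :=
      ⟨T ∪ S, (card_union_le T S).trans (by omega), fun x y hxy => by
        dsimp only
        rw [hT x y fun i hi => hxy i (mem_union_left S hi),
          chi_congr S fun i hi => hxy i (mem_union_right T hi)]⟩
    have hnonneg : ∀ x, 0 ≤ c x * (1 + s * chi S x) := fun x => by
      have hsχ := neg_abs_le (s * chi S x)
      rw [abs_mul, abs_chi, mul_one] at hsχ
      exact mul_nonneg (hc0 x) (by linarith)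
    convert hL _ hnonneg hjunta using 1
    rw [fCoeff, ← uexp_const_mul, ← uexp_add]
    congr 1
    ext x
    ring
  rw [abs_le]
  constructor <;> linarith [hshift 1 (by norm_num), hshift (-1) (by norm_num)]

lemma abs_fCoeff_mul_le_two_pow {d : ℕ} (hL : ∀ S, |fCoeff L S| ≤ 1) (hc : ∀ x, |c x| ≤ 1)
    (hcj : IsJunta d c) (S : Finset (Fin n)) :
    |fCoeff (fun x => L x * c x) S| ≤ 2 ^ d := by
  obtain ⟨T, hTd, hT⟩ := hcj
  rw [fCoeff_mul_eq_sum_powerset hT]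
  calc |∑ U ∈ T.powerset, fCoeff c U * fCoeff L (symmDiff S U)|
      ≤ ∑ U ∈ T.powerset, (1 : ℝ) := by
        refine (abs_sum_le_sum_abs _ _).trans (sum_le_sum fun U _ => ?_)
        rw [abs_mul]
        exact mul_le_one₀ (abs_fCoeff_le hc U) (abs_nonneg _) (hL _)
    _ = 2 ^ T.card := by simp
    _ ≤ 2 ^ d := pow_le_pow_right₀ one_le_two hTd

end SeparatingFunctional

section DecayingPerturbation

variable {n : ℕ}

lemma sub_le_uexp_mul_one_add_of_isDecaying {F h : (Fin n → Bool) → ℝ} {ε B : ℝ} {k : ℕ}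
    (hn : n ≠ 0) (hε : 0 ≤ ε) (hnε : n * ε ≤ 1)
    (hlow : ∀ S : Finset (Fin n), S.card ≤ k → |fCoeff F S| ≤ uexp F)
    (hhigh : ∀ S, |fCoeff F S| ≤ B) (hh : IsDecaying ε h) :
    uexp F - (uexp F * (3 * (n * ε)) + B * (3 * (n * ε) ^ (k + 1)))
      ≤ uexp (fun x => F x * (1 + h x)) := by
  have hA : 0 ≤ uexp F := (abs_nonneg _).trans (fCoeff_empty F ▸ hlow ∅ (by simp))
  have hB : 0 ≤ B := (abs_nonneg _).trans (hhigh ∅)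
  have hterm : ∀ S : Finset (Fin n), |fCoeff F S * fCoeff h S|
      ≤ uexp F * (if 1 ≤ S.card then ε ^ S.card else 0)
        + B * (if k + 1 ≤ S.card then ε ^ S.card else 0) := fun S => by
    rw [abs_mul]
    rcases S.eq_empty_or_nonempty with rfl | hS
    · simp [fCoeff_empty, hh.1]
    rw [if_pos (show 1 ≤ S.card from hS.card_pos)]
    by_cases hSk : S.card ≤ k
    · rw [if_neg (by omega), mul_zero, add_zero]
      exact mul_le_mul (hlow S hSk) (hh.2 S) (abs_nonneg _) hA
    · rw [if_pos (by omega)]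
      have := mul_le_mul (hhigh S) (hh.2 S) (abs_nonneg _) hB
      nlinarith [pow_nonneg hε S.card]
  have hsum : ∑ S, |fCoeff F S * fCoeff h S|
      ≤ uexp F * (3 * (n * ε)) + B * (3 * (n * ε) ^ (k + 1)) :=
    calc _ ≤ _ := sum_le_sum fun S _ => hterm S
      _ = uexp F * ∑ S ∈ univ.filter (fun S : Finset (Fin n) => 1 ≤ S.card), ε ^ S.card
          + B * ∑ S ∈ univ.filter (fun S : Finset (Fin n) => k + 1 ≤ S.card), ε ^ S.card := by
        simp only [sum_add_distrib, ← mul_sum, sum_filter]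
      _ ≤ _ := by
        have hone := sum_filter_pow_card_le hn hε hnε 1
        rw [pow_one] at hone
        exact add_le_add (mul_le_mul_of_nonneg_left hone hA)
          (mul_le_mul_of_nonneg_left (sum_filter_pow_card_le hn hε hnε _) hB)
  have hexpand : uexp (fun x => F x * (1 + h x)) = uexp F + ∑ S, fCoeff F S * fCoeff h S := by
    rw [← uexp_mul_eq_sum_fCoeff_mul, ← uexp_add]
    congr 1
    ext x
    ring
  rw [hexpand]
  linarith [neg_abs_le (∑ S, fCoeff F S * fCoeff h S),
    abs_sum_le_sum_abs (fun S => fCoeff F S * fCoeff h S) univ]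

end DecayingPerturbation

theorem stmt9_general (n d : ℕ) (hn : 2 ≤ n)
    (L : (Fin n → Bool) → ℝ)
    (hdegL : fdeg L ≤ 4 * d)
    (hLpos : ∀ p : (Fin n → Bool) → ℝ, (∀ x, 0 ≤ p x) → IsJunta (4 * d) p →
      0 ≤ uexp (fun x => L x * p x))
    (hLcoeff : ∀ S : Finset (Fin n), S.card ≤ 4 * d → |fCoeff L S| ≤ 1)
    (c : (Fin n → Bool) → ℝ) (hc0 : ∀ x, 0 ≤ c x) (hcj : IsJunta d c)
    (hcinf : ∀ x, |c x| ≤ 1)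
    (h : (Fin n → Bool) → ℝ) (hdec : IsDecaying (1 / (n : ℝ) ^ 4) h) :
    -(1 / (n : ℝ) ^ (8 * d)) ≤ uexp (fun x => L x * c x * (1 + h x)) := by
  have hLc : 0 ≤ uexp (fun x => L x * c x) :=
    hLpos c hc0 (let ⟨T, hTd, hT⟩ := hcj; ⟨T, hTd.trans (by omega), hT⟩)
  have hL : ∀ S, |fCoeff L S| ≤ 1 := fun S => by
    by_cases hS : S.card ≤ 4 * d
    · exact hLcoeff S hS
    · simp [fCoeff_eq_zero_of_fdeg_lt (show fdeg L < S.card by omega)]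
  have hn3 : (3 : ℝ) ≤ (n : ℝ) ^ 3 :=
    calc (3 : ℝ) ≤ 2 ^ 3 := by norm_num
      _ ≤ (n : ℝ) ^ 3 := pow_le_pow_left₀ (by norm_num) (by exact_mod_cast hn) 3
  have hnε : (n : ℝ) * (1 / (n : ℝ) ^ 4) = ((n : ℝ) ^ 3)⁻¹ := by
    field_simp
  have hpert := sub_le_uexp_mul_one_add_of_isDecaying (k := 3 * d) (by omega) (by positivity)
    (hnε ▸ inv_le_one_of_one_le₀ (by linarith))
    (fun S hS => abs_fCoeff_mul_le_uexp_mul hLpos hc0 hcj (by omega))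
    (abs_fCoeff_mul_le_two_pow hL hcinf hcj) hdec
  rw [hnε] at hpert
  have hlow : 3 * ((n : ℝ) ^ 3)⁻¹ ≤ 1 := by
    rw [← div_eq_mul_inv, div_le_one (by positivity)]
    exact hn3
  rw [one_div]
  nlinarith [two_pow_mul_three_mul_inv_pow_le d hn]

/-- the main robustness estimate for separating functionals against
products of juntas and decaying perturbations. -/
theorem stmt9 (n d : ℕ) (hn : 2 ≤ n) (hd : 1 ≤ d) (hdn : 4 * d < n)
    (L : (Fin n → Bool) → ℝ)
    (hdegL : fdeg L ≤ 4 * d)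
    (hLpos : ∀ p : (Fin n → Bool) → ℝ, (∀ x, 0 ≤ p x) → IsJunta (4 * d) p →
      0 ≤ uexp (fun x => L x * p x))
    (hLcoeff : ∀ S : Finset (Fin n), S.card ≤ 4 * d → |fCoeff L S| ≤ 1)
    (hLinf : ∀ x, |L x| ≤ (n : ℝ) ^ (4 * d))
    (c : (Fin n → Bool) → ℝ) (hc0 : ∀ x, 0 ≤ c x) (hcj : IsJunta d c)
    (hcinf : ∀ x, |c x| ≤ 1)
    (h : (Fin n → Bool) → ℝ) (hdec : IsDecaying (1 / (n : ℝ) ^ 4) h) :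
    -(1 / (n : ℝ) ^ (8 * d)) ≤ uexp (fun x => L x * c x * (1 + h x)) :=
  stmt9_general n d hn L hdegL hLpos hLcoeff c hc0 hcj hcinf h hdec
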